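/- The total number of Eulerian circuits (counted with starting edge fixed up to the equivalences described) of a connected 4-regular multigraph with at least one vertex is divisible by 4. -/

import Mathlib

/-!
Fix a vertex `v` and a dart `h₀`. Since `v` has degree 4, an Euler circuit passes through `v`
exactly twice, so up to rotation it is, in exactly one way, a concatenation `A ++ B` of two closed
walks at `v` with the edge of `h₀` in `A`. These pairs carry two commuting involutions: reversing
both walks (reversal of the whole circuit) and reversing `B` alone. A reversed walk traverses
the opposite darts of its edges, so no nontrivial element of the Klein group they generate fixes a
pair, and all orbits have size 4.
-/

/-- A multigraph presented by half-edges: `θ` is the fixed-point-free involution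
pairing the two half-edges of each edge, and `π` assigns each half-edge to its vertex. -/
structure HalfEdgeGraph (V H : Type) where
  θ : H → H
  π : H → V
  θ_invol : ∀ h, θ (θ h) = h
  θ_ne : ∀ h, θ h ≠ h

/-- An Eulerian circuit: a nonempty list of half-edges (each entry `h` is the dart
from `π h` to `π (θ h)`), using each edge exactly once (exactly one of its two
half-edges appears, once), and cyclically consecutive darts match up at vertices. -/
def HalfEdgeGraph.IsEulerCircuit {V H : Type} (G : HalfEdgeGraph V H) (l : List H) : Prop :=
  l ≠ [] ∧ l.Nodup ∧ (∀ h : H, h ∈ l ↔ G.θ h ∉ l) ∧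
    ∀ i : Fin l.length,
      G.π (G.θ (l.get i)) = G.π (l.get ⟨((i : ℕ) + 1) % l.length, Nat.mod_lt _ i.pos⟩)

theorem four_dvd_natCard_of_involutions {X : Type*} {σ τ : X → X}
    (hσ : Function.Involutive σ) (hτ : Function.Involutive τ) (hστ : ∀ x, σ (τ x) = τ (σ x))
    (hσx : ∀ x, σ x ≠ x) (hτx : ∀ x, τ x ≠ x) (hστx : ∀ x, σ (τ x) ≠ x) :
    4 ∣ Nat.card X := by
  classical
  cases finite_or_infinite X
  swap; · simp
  cases nonempty_fintype X
  let orbit : X → Finset X := fun x => {x, σ x, τ x, σ (τ x)}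
  have orbit_card (x : X) : (orbit x).card = 4 := by
    have h₁ := hσx x; have h₂ := hτx x; have h₃ := hστx x; have h₄ := hσx (τ x)
    have h₅ : σ x ≠ τ x := fun h => h₃ (by rw [← h, hσ])
    have h₆ : σ x ≠ σ (τ x) := fun h => h₂ (hσ.injective h).symm
    exact Finset.card_eq_four.mpr
      ⟨_, _, _, _, h₁.symm, h₂.symm, h₃.symm, h₅, h₆, h₄.symm, rfl⟩
  have orbit_eq (x y : X) (hy : y ∈ orbit x) : orbit y = orbit x := by
    simp only [orbit, Finset.mem_insert, Finset.mem_singleton] at hy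
    rcases hy with rfl | rfl | rfl | rfl <;> ext <;>
      simp only [orbit, Finset.mem_insert, Finset.mem_singleton, hστ, hσ _, hτ _] <;> tauto
  rw [Nat.card_eq_fintype_card, ← Finset.card_univ,
    Finset.card_eq_sum_card_fiberwise (f := orbit) (t := Finset.univ.image orbit) (by simp)]
  refine Finset.dvd_sum fun b hb => ?_
  obtain ⟨x, -, rfl⟩ := Finset.mem_image.mp hb
  have fiber : Finset.univ.filter (orbit · = orbit x) = orbit x := by
    ext y
    simp only [Finset.mem_filter, Finset.mem_univ, true_and]
    exact ⟨fun h => h ▸ by simp [orbit], orbit_eq x y⟩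
  rw [fiber, orbit_card]

theorem List.IsRotated.exists_append {α : Type*} {l l' : List α} (h : l ~r l') :
    ∃ X Y, l = X ++ Y ∧ l' = Y ++ X := by
  obtain ⟨n, hn, rfl⟩ := List.isRotated_iff_mod.mp h
  exact ⟨l.take n, l.drop n, (List.take_append_drop n l).symm,
    List.rotate_eq_drop_append_take hn⟩

theorem List.isRotated_of_quot_mk_eq {α : Type*} {P : List α → Prop} {a b : {l // P l}}
    (h : Quot.mk (fun l₁ l₂ : {l // P l} => ∃ n, l₂.1 = l₁.1.rotate n) a = Quot.mk _ b) :
    a.1 ~r b.1 := by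
  have hgen := Quot.eqvGen_exact h
  clear h
  induction hgen with
  | rel x y hxy => obtain ⟨n, hn⟩ := hxy; exact ⟨n, hn.symm⟩
  | refl => exact .refl _
  | symm _ _ _ ih => exact ih.symm
  | trans _ _ _ _ _ ih₁ ih₂ => exact ih₁.trans ih₂

theorem List.Nodup.natCard_subtype_eq_countP {α : Type*} {L : List α} (hnd : L.Nodup)
    (hL : ∀ x, x ∈ L) (p : α → Prop) [DecidablePred p] :
    Nat.card {x // p x} = L.countP (p ·) := by
  classical
  rw [List.countP_eq_length_filter, ← List.toFinset_card_of_nodup (hnd.filter _),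
    ← Nat.card_eq_finsetCard]
  exact Nat.card_congr (Equiv.subtypeEquivRight fun x => by simp [hL])

namespace HalfEdgeGraph

variable {V H : Type} (G : HalfEdgeGraph V H)

def rev (l : List H) : List H := l.reverse.map G.θ

def IsWalk : V → V → List H → Prop
  | u, w, [] => u = w
  | u, w, h :: l => G.π h = u ∧ IsWalk (G.π (G.θ h)) w l

def IsClosedWalkAt (v : V) (l : List H) : Prop := l ≠ [] ∧ G.IsWalk v v l

def IsOrientation (l : List H) : Prop := l.Nodup ∧ ∀ h, h ∈ l ↔ G.θ h ∉ l

variable {G}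

lemma θ_injective : Function.Injective G.θ := Function.LeftInverse.injective G.θ_invol

@[simp] lemma mem_rev {h : H} {l : List H} : h ∈ G.rev l ↔ G.θ h ∈ l := by
  simp only [rev, List.mem_map, List.mem_reverse]
  exact ⟨fun ⟨a, ha, e⟩ => e ▸ (G.θ_invol a).symm ▸ ha,
    fun hl => ⟨_, hl, G.θ_invol h⟩⟩

@[simp] lemma rev_rev (l : List H) : G.rev (G.rev l) = l := by
  simp [rev, List.map_reverse, Function.comp_def, G.θ_invol]

@[simp] lemma rev_eq_nil {l : List H} : G.rev l = [] ↔ l = [] := by simp [rev]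

lemma rev_append (A B : List H) : G.rev (A ++ B) = G.rev B ++ G.rev A := by simp [rev]

lemma rev_cons (h : H) (l : List H) : G.rev (h :: l) = G.rev l ++ [G.θ h] := by simp [rev]

section walk

variable {u v w : V} {l A B : List H}

@[simp] lemma isWalk_nil : G.IsWalk u w [] ↔ u = w := Iff.rfl

@[simp] lemma isWalk_cons {h : H} :
    G.IsWalk u w (h :: l) ↔ G.π h = u ∧ G.IsWalk (G.π (G.θ h)) w l := Iff.rfl

lemma isWalk_append : G.IsWalk u w (A ++ B) ↔ ∃ x, G.IsWalk u x A ∧ G.IsWalk x w B := by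
  induction A generalizing u with
  | nil => simp
  | cons h A ih => simp [ih, and_assoc]

lemma isWalk_rev : G.IsWalk u w (G.rev l) ↔ G.IsWalk w u l := by
  induction l generalizing u w with
  | nil => simp [rev, eq_comm]
  | cons h l ih => simp [rev_cons, isWalk_append, ih, G.θ_invol, and_comm, eq_comm]

lemma isWalk_iff_cons_map_eq :
    G.IsWalk u w l ↔ u :: l.map (G.π ∘ G.θ) = l.map G.π ++ [w] := by
  induction l generalizing u with
  | nil => simp
  | cons h l ih => simp [ih, eq_comm]

lemma IsWalk.perm_map (hl : G.IsWalk u u l) : (l.map (G.π ∘ G.θ)).Perm (l.map G.π) := by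
  rw [isWalk_iff_cons_map_eq] at hl
  exact (List.perm_cons u).mp (by rw [hl]; exact List.perm_append_singleton u _)

lemma IsWalk.countP_pos [DecidableEq V] (hl : G.IsWalk u w l) (hne : l ≠ []) :
    0 < l.countP (G.π · = u) := by
  obtain ⟨h, l, rfl⟩ := List.exists_cons_of_ne_nil hne
  simp_all

lemma IsWalk.exists_of_isRotated {l' : List H} (hl : G.IsWalk u u l) (hrot : l ~r l') :
    ∃ x, G.IsWalk x x l' := by
  obtain ⟨X, Y, rfl, rfl⟩ := hrot.exists_append
  obtain ⟨x, hX, hY⟩ := isWalk_append.mp hl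
  exact ⟨x, isWalk_append.mpr ⟨u, hY, hX⟩⟩

lemma IsClosedWalkAt.rev (hl : G.IsClosedWalkAt v l) : G.IsClosedWalkAt v (G.rev l) :=
  ⟨by simpa using hl.1, isWalk_rev.mpr hl.2⟩

lemma isClosedWalkAt_append (hA : G.IsClosedWalkAt v A) (hB : G.IsWalk v v B) :
    G.IsClosedWalkAt v (A ++ B) :=
  ⟨by simp [hA.1], isWalk_append.mpr ⟨v, hA.2, hB⟩⟩

end walk

namespace IsOrientation

variable {l A B : List H}

lemma perm (hl : G.IsOrientation l) (hp : l.Perm A) : G.IsOrientation A :=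
  ⟨hp.nodup_iff.mp hl.1, fun h => by rw [← hp.mem_iff, ← hp.mem_iff]; exact hl.2 h⟩

lemma θ_notMem_of_mem (hl : G.IsOrientation l) {h : H} (hh : h ∈ l) : G.θ h ∉ l :=
  (hl.2 h).mp hh

lemma mem_or_θ_mem (hl : G.IsOrientation l) (h : H) : h ∈ l ∨ G.θ h ∈ l := by
  by_cases hh : h ∈ l
  · exact .inl hh
  · exact .inr (not_not.mp (mt (hl.2 h).mpr hh))

lemma append_rev (hl : G.IsOrientation (A ++ B)) : G.IsOrientation (A ++ G.rev B) := by
  obtain ⟨hnd, hmem⟩ := hl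
  obtain ⟨hA, hB, hAB⟩ := List.nodup_append.mp hnd
  refine ⟨List.nodup_append.mpr ⟨hA, ?_, ?_⟩, fun h => ?_⟩
  · exact (List.nodup_reverse.mpr hB).map θ_injective
  · rintro a ha _ hb rfl
    exact hmem a |>.mp (List.mem_append_left B ha) (List.mem_append_right A (mem_rev.mp hb))
  · have h₁ := hmem h
    have h₂ := hAB h
    have h₃ := hAB (G.θ h)
    simp only [List.mem_append, mem_rev, G.θ_invol] at h₁ h₂ h₃ ⊢
    -- exactly one of `h ∈ A`, `h ∈ B`, `θ h ∈ A`, `θ h ∈ B` holds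
    grind

lemma rev (hl : G.IsOrientation l) : G.IsOrientation (G.rev l) := by
  simpa using append_rev (A := []) hl

lemma rev_ne_self (hl : G.IsOrientation (A ++ B)) (hA : A ≠ []) : G.rev A ≠ A := by
  intro he
  obtain ⟨h, hh⟩ := List.exists_mem_of_ne_nil A hA
  have hθ : G.θ h ∈ A := by rw [← he, mem_rev, G.θ_invol]; exact hh
  exact hl.θ_notMem_of_mem (List.mem_append_left B hh) (List.mem_append_left B hθ)

lemma edge_notMem_right (hl : G.IsOrientation (A ++ B)) {h : H} (hA : h ∈ A ∨ G.θ h ∈ A) :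
    ¬(h ∈ B ∨ G.θ h ∈ B) := by
  have hAB := (List.nodup_append.mp hl.1).2.2
  rintro (hB | hB) <;> rcases hA with hA | hA
  · exact hAB _ hA _ hB rfl
  · exact hl.θ_notMem_of_mem (List.mem_append_right A hB) (List.mem_append_left B hA)
  · exact hl.θ_notMem_of_mem (List.mem_append_left B hA) (List.mem_append_right A hB)
  · exact hAB _ hA _ hB rfl

lemma two_mul_countP_eq_natCard [DecidableEq V] {u : V} (hl : G.IsOrientation l)
    (hw : G.IsWalk u u l) (v : V) : 2 * l.countP (G.π · = v) = Nat.card {h // G.π h = v} := by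
  -- `l ++ l.map θ` lists every dart once, and a closed walk enters `v` as often as it leaves it.
  have hnd : (l ++ l.map G.θ).Nodup := by
    refine List.nodup_append.mpr ⟨hl.1, hl.1.map θ_injective, ?_⟩
    rintro a ha b hb rfl
    obtain ⟨c, hc, rfl⟩ := List.mem_map.mp hb
    exact hl.θ_notMem_of_mem hc ha
  have hcover : ∀ h, h ∈ l ++ l.map G.θ := fun h => by
    rcases hl.mem_or_θ_mem h with hh | hh
    · exact List.mem_append_left _ hh
    · exact List.mem_append_right _ (List.mem_map.mpr ⟨_, hh, G.θ_invol h⟩)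
  have hθ : (l.map G.θ).countP (G.π · = v) = l.countP (G.π · = v) := by
    simpa [List.countP_map, Function.comp_def] using hw.perm_map.countP_eq (· = v)
  rw [hnd.natCard_subtype_eq_countP hcover, List.countP_append, hθ, two_mul]

end IsOrientation

lemma forall_get_iff_map_eq_map_rotate {l : List H} :
    (∀ i : Fin l.length,
      G.π (G.θ (l.get i)) = G.π (l.get ⟨((i : ℕ) + 1) % l.length, Nat.mod_lt _ i.pos⟩)) ↔
      l.map (G.π ∘ G.θ) = (l.rotate 1).map G.π := by
  rw [List.ext_get_iff]
  simp [List.getElem_rotate, Fin.forall_iff]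

lemma map_eq_map_rotate_iff {l : List H} (hne : l ≠ []) :
    l.map (G.π ∘ G.θ) = (l.rotate 1).map G.π ↔ ∃ u, G.IsClosedWalkAt u l := by
  obtain ⟨h, l, rfl⟩ := List.exists_cons_of_ne_nil hne
  simp [IsClosedWalkAt, isWalk_iff_cons_map_eq]

lemma isEulerCircuit_iff {l : List H} :
    G.IsEulerCircuit l ↔ G.IsOrientation l ∧ ∃ u, G.IsClosedWalkAt u l := by
  constructor
  · rintro ⟨hne, hnd, hmem, hcyc⟩
    exact ⟨⟨hnd, hmem⟩,
      (map_eq_map_rotate_iff hne).mp (forall_get_iff_map_eq_map_rotate.mp hcyc)⟩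
  · rintro ⟨⟨hnd, hmem⟩, u, hu⟩
    exact ⟨hu.1, hnd, hmem,
      forall_get_iff_map_eq_map_rotate.mpr ((map_eq_map_rotate_iff hu.1).mpr ⟨u, hu⟩)⟩

lemma eq_nil_of_countP_le_two [DecidableEq V] {v x : V} {A a B : List H}
    (hA : G.IsClosedWalkAt v A) (ha : G.IsWalk v x a) (hB : G.IsClosedWalkAt v B)
    (hc : (A ++ a ++ B).countP (G.π · = v) ≤ 2) : a = [] := by
  by_contra hne
  have := hA.2.countP_pos hA.1
  have := ha.countP_pos hne
  have := hB.2.countP_pos hB.1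
  simp only [List.countP_append] at hc
  omega

lemma eq_of_append_eq_append [DecidableEq V] {v : V} {A B A' B' : List H}
    (hA : G.IsClosedWalkAt v A) (hB : G.IsClosedWalkAt v B) (hA' : G.IsClosedWalkAt v A')
    (hB' : G.IsClosedWalkAt v B') (hc : (A ++ B).countP (G.π · = v) ≤ 2)
    (h : A ++ B = A' ++ B') : A = A' ∧ B = B' := by
  rcases List.append_eq_append_iff.mp h with ⟨a, rfl, rfl⟩ | ⟨a, rfl, rfl⟩
  · obtain ⟨x, ha, -⟩ := isWalk_append.mp hB.2
    obtain rfl := eq_nil_of_countP_le_two hA ha hB' (by simpa using hc)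
    simp
  · obtain ⟨x, ha, -⟩ := isWalk_append.mp hB'.2
    obtain rfl := eq_nil_of_countP_le_two hA' ha hB hc
    simp

/-- The edge of `h₀` is required to lie in `A` so that each Euler circuit, up to rotation, arises
from exactly one pair `(A, B)`. -/
def eulerSplits (v : V) (h₀ : H) : Set (List H × List H) :=
  {p | G.IsOrientation (p.1 ++ p.2) ∧ G.IsClosedWalkAt v p.1 ∧ G.IsClosedWalkAt v p.2 ∧
    (h₀ ∈ p.1 ∨ G.θ h₀ ∈ p.1)}

section eulerSplits

variable {v : V} {h₀ : H} {p q : List H × List H}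

lemma isEulerCircuit_of_mem_eulerSplits (hp : p ∈ G.eulerSplits v h₀) :
    G.IsEulerCircuit (p.1 ++ p.2) :=
  isEulerCircuit_iff.mpr ⟨hp.1, v, isClosedWalkAt_append hp.2.1 hp.2.2.1.2⟩

lemma rev_mem_eulerSplits (hp : p ∈ G.eulerSplits v h₀) :
    (G.rev p.1, G.rev p.2) ∈ G.eulerSplits v h₀ := by
  obtain ⟨ho, hA, hB, he⟩ := hp
  refine ⟨?_, hA.rev, hB.rev, by simpa [G.θ_invol, or_comm] using he⟩
  rw [← rev_append]
  exact (ho.perm List.perm_append_comm).rev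

lemma rev_right_mem_eulerSplits (hp : p ∈ G.eulerSplits v h₀) :
    (p.1, G.rev p.2) ∈ G.eulerSplits v h₀ :=
  ⟨hp.1.append_rev, hp.2.1, hp.2.2.1.rev, hp.2.2.2⟩

lemma four_dvd_card_eulerSplits (v : V) (h₀ : H) : 4 ∣ Nat.card (G.eulerSplits v h₀) := by
  refine four_dvd_natCard_of_involutions (σ := fun p => ⟨_, rev_mem_eulerSplits p.2⟩)
    (τ := fun p => ⟨_, rev_right_mem_eulerSplits p.2⟩) (fun p => by simp) (fun p => by simp)
    (fun p => rfl) ?_ ?_ ?_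
  all_goals
    rintro ⟨⟨A, B⟩, ho, hA, hB, _⟩ he
    simp only [Subtype.ext_iff, Prod.ext_iff] at he
  · exact ho.rev_ne_self hA.1 he.1
  · exact (ho.perm List.perm_append_comm).rev_ne_self hB.1 he.2
  · exact ho.rev_ne_self hA.1 he.1

lemma eq_of_isRotated (hv : Nat.card {h // G.π h = v} = 4) (hp : p ∈ G.eulerSplits v h₀)
    (hq : q ∈ G.eulerSplits v h₀) (hrot : p.1 ++ p.2 ~r q.1 ++ q.2) : p = q := by
  classical
  obtain ⟨A, B⟩ := p
  obtain ⟨A', B'⟩ := q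
  obtain ⟨ho, hA, hB, he⟩ := hp
  obtain ⟨-, hA', hB', he'⟩ := hq
  have hc := ho.two_mul_countP_eq_natCard (isWalk_append.mpr ⟨v, hA.2, hB.2⟩) v
  rw [hv] at hc
  suffices A ++ B = A' ++ B' by
    obtain ⟨rfl, rfl⟩ := eq_of_append_eq_append hA hB hA' hB' (by omega) this
    rfl
  -- A nontrivial rotation starting at `v` must be `B ++ A`, and `B` does not contain `h₀`'s edge.
  obtain ⟨X, Y, hXY, hYX⟩ := hrot.exists_append
  rcases eq_or_ne X [] with rfl | hX
  · simpa [hXY] using hYX.symm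
  rcases eq_or_ne Y [] with rfl | hY
  · simpa [hXY] using hYX.symm
  exfalso
  obtain ⟨x, hXw, hYw⟩ := isWalk_append.mp (hXY ▸ (isClosedWalkAt_append hA hB.2).2)
  obtain ⟨y, hYw', -⟩ := isWalk_append.mp (hYX ▸ (isClosedWalkAt_append hA' hB'.2).2)
  obtain rfl : x = v := by
    obtain ⟨h, Y, rfl⟩ := List.exists_cons_of_ne_nil hY
    exact hYw.1.symm.trans hYw'.1
  obtain ⟨rfl, rfl⟩ := eq_of_append_eq_append hA hB ⟨hX, hXw⟩ ⟨hY, hYw⟩ (by omega) hXY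
  rw [List.countP_append] at hc
  obtain ⟨rfl, rfl⟩ := eq_of_append_eq_append hA' hB' hB hA
    (by rw [hYX, List.countP_append]; omega) hYX
  exact ho.edge_notMem_right he he'

lemma exists_isRotated_append_of_isEulerCircuit (hv : Nat.card {h // G.π h = v} = 4)
    {l : List H} (hl : G.IsEulerCircuit l) :
    ∃ A B, G.IsClosedWalkAt v A ∧ G.IsClosedWalkAt v B ∧ l ~r A ++ B := by
  classical
  obtain ⟨ho, u, -, hw⟩ := isEulerCircuit_iff.mp hl
  have hc := ho.two_mul_countP_eq_natCard hw v
  rw [hv] at hc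
  obtain ⟨h, hh, hhv⟩ := List.countP_pos_iff.mp (by omega : 0 < l.countP (G.π · = v))
  obtain ⟨X, Y, rfl⟩ := List.append_of_mem hh
  have hrot : X ++ h :: Y ~r h :: (Y ++ X) := List.isRotated_append
  have hc' := hrot.perm.countP_eq (G.π · = v)
  simp only [List.countP_append, List.countP_cons, hhv, ↓reduceIte] at hc hc'
  have hpos : 0 < (Y ++ X).countP (G.π · = v) := by rw [List.countP_append]; omega
  obtain ⟨h', hh', hh'v⟩ := List.countP_pos_iff.mp hpos
  obtain ⟨P, Q, hPQ⟩ := List.append_of_mem hh'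
  rw [hPQ, ← List.cons_append] at hrot
  obtain ⟨x, hw'⟩ := hw.exists_of_isRotated hrot
  obtain ⟨y, hA, hB⟩ := isWalk_append.mp hw'
  obtain rfl : x = v := hA.1 ▸ of_decide_eq_true hhv
  obtain rfl : y = x := hB.1 ▸ of_decide_eq_true hh'v
  exact ⟨_, _, ⟨List.cons_ne_nil _ _, hA⟩, ⟨List.cons_ne_nil _ _, hB⟩, hrot⟩

lemma exists_mem_eulerSplits_isRotated (hv : Nat.card {h // G.π h = v} = 4) (h₀ : H)
    {l : List H} (hl : G.IsEulerCircuit l) : ∃ p ∈ G.eulerSplits v h₀, l ~r p.1 ++ p.2 := by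
  obtain ⟨A, B, hA, hB, hrot⟩ := exists_isRotated_append_of_isEulerCircuit hv hl
  have ho := (isEulerCircuit_iff.mp hl).1.perm hrot.perm
  by_cases hA₀ : h₀ ∈ A ∨ G.θ h₀ ∈ A
  · exact ⟨(A, B), ⟨ho, hA, hB, hA₀⟩, hrot⟩
  · have hB₀ := ho.mem_or_θ_mem h₀
    simp only [List.mem_append] at hB₀
    exact ⟨(B, A), ⟨ho.perm List.perm_append_comm, hB, hA, by tauto⟩,
      hrot.trans List.isRotated_append⟩

lemma card_eulerSplits (hv : Nat.card {h // G.π h = v} = 4) (h₀ : H) :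
    Nat.card (G.eulerSplits v h₀) =
      Nat.card (Quot (fun l₁ l₂ : {l : List H // G.IsEulerCircuit l} =>
        ∃ n : ℕ, (l₂ : List H) = (l₁ : List H).rotate n)) := by
  refine Nat.card_congr (Equiv.ofBijective
    (fun p => Quot.mk _ ⟨p.1.1 ++ p.1.2, isEulerCircuit_of_mem_eulerSplits p.2⟩) ⟨?_, ?_⟩)
  · intro p q hpq
    exact Subtype.ext (eq_of_isRotated hv p.2 q.2 (List.isRotated_of_quot_mk_eq hpq))
  · rintro ⟨l, hl⟩
    obtain ⟨p, hp, hrot⟩ := exists_mem_eulerSplits_isRotated hv h₀ hl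
    obtain ⟨n, hn⟩ := hrot.symm
    exact ⟨⟨p, hp⟩, Quot.sound ⟨n, hn.symm⟩⟩

end eulerSplits

end HalfEdgeGraph

theorem stmt11_general {V H : Type} [Nonempty V] (G : HalfEdgeGraph V H)
    (hreg : ∀ v : V, Nat.card {h : H // G.π h = v} = 4) :
    4 ∣ Nat.card (Quot (fun l₁ l₂ : {l : List H // G.IsEulerCircuit l} =>
      ∃ n : ℕ, (l₂ : List H) = (l₁ : List H).rotate n)) := by
  obtain ⟨v⟩ := ‹Nonempty V›
  obtain ⟨⟨h₀, -⟩⟩ := (Nat.card_pos_iff.mp (hreg v ▸ four_pos)).1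
  rw [← HalfEdgeGraph.card_eulerSplits (hreg v) h₀]
  exact HalfEdgeGraph.four_dvd_card_eulerSplits v h₀

/-- The number of Eulerian circuits of a connected 4-regular multigraph with at least
one vertex, counted as directed closed dart-sequences up to cyclic rotation, is
divisible by 4. -/
theorem stmt11 {V H : Type} [Fintype V] [Fintype H] [Nonempty V] (G : HalfEdgeGraph V H)
    (hconn : ∀ u v : V,
      Relation.ReflTransGen (fun a b => ∃ h : H, G.π h = a ∧ G.π (G.θ h) = b) u v)
    (hreg : ∀ v : V, Nat.card {h : H // G.π h = v} = 4) :
    4 ∣ Nat.card (Quot (fun l₁ l₂ : {l : List H // G.IsEulerCircuit l} =>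
      ∃ n : ℕ, (l₂ : List H) = (l₁ : List H).rotate n)) :=
  stmt11_general G hreg
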